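/- arXiv:1511.04762 — 3 statements merged into one kernel-verified Lean document; each statement's English description precedes it below -/
import Mathlib

section
/- Let α be a type with decidable equality, L ≥ 1 a natural number, s : Multiset α, and m : α a most frequent color of s (for all a : α, s.count a ≤ s.count m). Set n = Multiset.card s and suppose 2 * s.count m ≤ n (discrepancy at most 0). Then the minimum number of bins in a valid capacity-L packing of s equals ⌈n / L⌉ = (n + L - 1) / L: there is such a packing into (n + L - 1) / L bins, and every valid capacity-L packing uses at least (n + L - 1) / L bins. -/
/-!
Since no colour fills more than half of the items, the items can be laid out in a single
sequence with no two equal neighbours: repeatedly put down the most frequent colour among those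
different from the previous item, which keeps every colour at most half of what remains, rounded
up. Cutting that sequence into consecutive blocks of `L` items gives `⌈n / L⌉` valid bins, and no
packing does better because `n` items need at least `⌈n / L⌉` bins of size at most `L`.
-/

namespace Multiset

variable {α : Type*} [DecidableEq α]

theorem count_add_count_le_card (s : Multiset α) {a c : α} (h : a ≠ c) :
    s.count a + s.count c ≤ card s := by
  induction s using Multiset.induction with
  | empty => simp
  | cons x t ih =>
    simp only [count_cons, card_cons]
    split_ifs with hxa hxc hxc
    · exact absurd (hxa.trans hxc.symm) h
    all_goals omega

theorem exists_max_count_of_count_lt_card {s : Multiset α} {b : α} (hb : s.count b < card s) :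
    ∃ c ∈ s, c ≠ b ∧ ∀ a ∈ s, a ≠ b → s.count a ≤ s.count c := by
  obtain ⟨c, hcs, hcb⟩ : ∃ c ∈ s, c ≠ b := by
    by_contra! h
    exact hb.ne (count_eq_card.2 fun x hx => (h x hx).symm)
  have hne : ((s.filter (· ≠ b)).toFinset).Nonempty := ⟨c, by simp [hcs, hcb]⟩
  obtain ⟨c, hc, hmax⟩ := Finset.exists_max_image _ (fun a => s.count a) hne
  simp only [mem_toFinset, mem_filter] at hc hmax
  exact ⟨c, hc.1, hc.2, fun a ha hab => hmax a ⟨ha, hab⟩⟩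

theorem two_mul_count_erase_le {s : Multiset α} {b c : α} (hc : c ∈ s) (hcb : c ≠ b)
    (hc_max : ∀ a ∈ s, a ≠ b → s.count a ≤ s.count c)
    (hs : ∀ a, 2 * s.count a ≤ card s + 1) (hb : 2 * s.count b ≤ card s) (a : α) :
    2 * (s.erase c).count a ≤ card (s.erase c) + 1 := by
  have hcard := card_erase_add_one hc
  rcases eq_or_ne a c with rfl | hac
  · rw [count_erase_self]
    have := hs a
    omega
  rw [count_erase_of_ne hac]
  rcases eq_or_ne a b with rfl | hab
  · omega
  -- a colour other than `b` and `c` is no more frequent than `c`, so it fills at most half of `s`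
  by_cases ha : a ∈ s
  · have := hc_max a ha hab
    have := s.count_add_count_le_card hac
    omega
  · rw [count_eq_zero_of_notMem ha]
    omega

/-- The head condition lets the induction prepend an item of a different colour. -/
theorem exists_isChain_ne_of_two_mul_count_le (s : Multiset α) (b : α)
    (hs : ∀ a, 2 * s.count a ≤ card s + 1) (hb : 2 * s.count b ≤ card s) :
    ∃ l : List α, ↑l = s ∧ l.IsChain (· ≠ ·) ∧ ∀ x ∈ l.head?, x ≠ b := by
  induction s using Multiset.strongInductionOn generalizing b with
  | ih s ih =>
    rcases eq_or_ne s 0 with rfl | hs0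
    · exact ⟨[], rfl, .nil, by simp⟩
    have hb_lt : s.count b < card s := by
      have := card_pos.2 hs0
      omega
    obtain ⟨c, hc, hcb, hc_max⟩ := exists_max_count_of_count_lt_card hb_lt
    have hc_erase : 2 * (s.erase c).count c ≤ card (s.erase c) := by
      have := card_erase_add_one hc
      have := hs c
      rw [count_erase_self]
      omega
    obtain ⟨l, hl, hchain, hhead⟩ := ih (s.erase c) (erase_lt.2 hc) c
      (two_mul_count_erase_le hc hcb hc_max hs hb) hc_erase
    refine ⟨c :: l, ?_, List.isChain_cons.2 ⟨fun y hy => (hhead y hy).symm, hchain⟩, by simpa⟩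
    rw [← cons_coe, hl, cons_erase hc]

end Multiset

namespace List

variable {α : Type*}

theorem sum_map_coe_eq_flatten (L : List (List α)) :
    (L.map (fun b => (b : Multiset α))).sum = (L.flatten : Multiset α) := by
  induction L with
  | nil => rfl
  | cons b L ih => simp_all

theorem length_flatten_le_length_mul {L : List (List α)} {n : ℕ} (h : ∀ b ∈ L, b.length ≤ n) :
    L.flatten.length ≤ L.length * n := by
  rw [length_flatten, ← smul_eq_mul, ← length_map (f := length)]
  exact sum_le_card_nsmul (L.map length) n (by simpa using h)

/-- `l.chunks k` cuts `l` into consecutive blocks of length `k + 1`, the last one possibly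
shorter. -/
def chunks (k : ℕ) : List α → List (List α)
  | [] => []
  | x :: xs => (x :: xs.take k) :: chunks k (xs.drop k)
termination_by l => l.length
decreasing_by simp

theorem flatten_chunks (k : ℕ) (l : List α) : (l.chunks k).flatten = l := by
  induction l using chunks.induct k with
  | case1 => simp [chunks]
  | case2 x xs ih => simp [chunks, ih]

theorem length_chunks (k : ℕ) (l : List α) : (l.chunks k).length = (l.length + k) / (k + 1) := by
  induction l using chunks.induct k with
  | case1 => simp [chunks, Nat.div_eq_of_lt]
  | case2 x xs ih =>
    rw [chunks, length_cons, ih, length_drop, length_cons]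
    rcases le_or_gt k xs.length with h | h
    · rw [show xs.length + 1 + k = xs.length - k + k + (k + 1) by omega,
        Nat.add_div_right _ k.succ_pos]
    · rw [Nat.sub_eq_zero_of_le h.le, Nat.div_eq_of_lt (by omega), Nat.zero_add,
        show xs.length + 1 + k = (k + 1) + xs.length by omega, Nat.add_div_left _ k.succ_pos,
        Nat.div_eq_of_lt (by omega)]

theorem length_le_of_mem_chunks {k : ℕ} {l b : List α} (hb : b ∈ l.chunks k) :
    b.length ≤ k + 1 := by
  induction l using chunks.induct k with
  | case1 => simp [chunks] at hb
  | case2 x xs ih =>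
    rw [chunks, mem_cons] at hb
    rcases hb with rfl | hb
    · simp
    · exact ih hb

theorem isInfix_of_mem_chunks {k : ℕ} {l b : List α} (hb : b ∈ l.chunks k) : b <:+: l := by
  induction l using chunks.induct k with
  | case1 => simp [chunks] at hb
  | case2 x xs ih =>
    rw [chunks, mem_cons] at hb
    rcases hb with rfl | hb
    · exact (take_prefix (k + 1) (x :: xs)).isInfix
    · exact (ih hb).trans ((drop_suffix k xs).trans (suffix_cons x xs)).isInfix

end List

theorem alternate_unit_optimal_nonpos_discrepancy {α : Type*} [DecidableEq α]
    (L : ℕ) (hL : 1 ≤ L) (s : Multiset α) (m : α)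
    (hmax : ∀ a : α, s.count a ≤ s.count m)
    (hdisc : 2 * s.count m ≤ Multiset.card s) :
    (∃ bins : List (List α),
        bins.length = (Multiset.card s + L - 1) / L ∧
        (bins.map (fun b => (b : Multiset α))).sum = s ∧
        ∀ b ∈ bins, b.length ≤ L ∧ List.Chain' (· ≠ ·) b) ∧
    (∀ bins : List (List α),
        (bins.map (fun b => (b : Multiset α))).sum = s →
        (∀ b ∈ bins, b.length ≤ L ∧ List.Chain' (· ≠ ·) b) →
        (Multiset.card s + L - 1) / L ≤ bins.length) := by
  obtain ⟨k, rfl⟩ : ∃ k, L = k + 1 := ⟨L - 1, by omega⟩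
  have hcount (a : α) : 2 * s.count a ≤ Multiset.card s :=
    (Nat.mul_le_mul_left 2 (hmax a)).trans hdisc
  refine ⟨?_, fun bins hsum hbins => ?_⟩
  · obtain ⟨l, rfl, hl, -⟩ := Multiset.exists_isChain_ne_of_two_mul_count_le s m
      (fun a => (hcount a).trans (Nat.le_succ _)) (hcount m)
    refine ⟨l.chunks k, by simp [List.length_chunks], ?_, fun b hb =>
      ⟨List.length_le_of_mem_chunks hb, hl.infix (List.isInfix_of_mem_chunks hb)⟩⟩
    rw [List.sum_map_coe_eq_flatten, List.flatten_chunks]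
  · have hcard : Multiset.card s ≤ bins.length * (k + 1) := by
      rw [← hsum, List.sum_map_coe_eq_flatten, Multiset.coe_card]
      exact List.length_flatten_le_length_mul fun b hb => (hbins b hb).1
    rw [Nat.div_le_iff_le_mul_add_pred k.add_one_pos, mul_comm]
    omega
end

section
/- Let α be a type with decidable equality, L an odd natural number with L ≥ 3, s : Multiset α, and m : α. Set n = Multiset.card s, O = n - s.count m, and suppose D = s.count m - O > 0 and D > (O + (L-1)/2 - 1) / ((L-1)/2) (i.e., D > ⌈O / ⌊L/2⌋⌉). Then the minimum number of bins in a valid capacity-L packing of s equals D. -/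
/-!
In a bin without two equal neighbours a colour occupies at most every other slot, so
`2 · count m b ≤ |b| + 1`. Summed over a packing of `s` this gives
`2 (O + D) ≤ (2 O + D) + #bins`, i.e. at least `D` bins. Conversely `D > ⌈O / k⌉` with
`k = ⌊L / 2⌋` means `O ≤ D k`, so the other items split into `D` chunks of at most `k`, and
the bin `m x₁ m x₂ … m xₜ m` built from a chunk has length `2t + 1 ≤ L` and uses `t + 1`
copies of `m`: `O + D = count m s` in total.
-/

namespace List

variable {α : Type*}

theorem two_mul_count_le_length_add_one [DecidableEq α] (a : α) :
    ∀ l : List α, l.IsChain (· ≠ ·) → 2 * l.count a ≤ l.length + 1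
  | [], _ => by simp
  | [x], _ => by
    simp only [count_singleton, length_singleton, beq_iff_eq]
    split_ifs <;> omega
  | x :: y :: t, h => by
    obtain ⟨hxy, hyt⟩ := isChain_cons_cons.mp h
    have ht := two_mul_count_le_length_add_one a t hyt.tail
    simp only [count_cons, length_cons, beq_iff_eq]
    by_cases hx : x = a <;> by_cases hy : y = a
    · exact absurd (hx.trans hy.symm) hxy
    all_goals simp only [hx, hy, if_true, if_false]; omega

theorem two_mul_count_flatten_le [DecidableEq α] (a : α) (bins : List (List α))
    (h : ∀ b ∈ bins, b.IsChain (· ≠ ·)) :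
    2 * bins.flatten.count a ≤ bins.flatten.length + bins.length := by
  induction bins with
  | nil => simp
  | cons b bins ih =>
    have hb := two_mul_count_le_length_add_one a b (h b mem_cons_self)
    have hbins := ih fun c hc => h c (mem_cons_of_mem b hc)
    simp only [flatten_cons, count_append, length_append, length_cons]
    omega

def interleaveWith (m : α) : List α → List α
  | [] => [m]
  | x :: t => m :: x :: interleaveWith m t

theorem length_interleaveWith (m : α) (c : List α) :
    (interleaveWith m c).length = 2 * c.length + 1 := by
  induction c with
  | nil => rfl
  | cons x t ih => simp only [interleaveWith, length_cons, ih]; ring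

theorem head?_interleaveWith (m : α) (c : List α) : (interleaveWith m c).head? = some m := by
  cases c <;> rfl

theorem coe_interleaveWith (m : α) (c : List α) :
    (interleaveWith m c : Multiset α) = c + Multiset.replicate (c.length + 1) m := by
  induction c with
  | nil => rfl
  | cons x t ih =>
    simp only [interleaveWith, ← Multiset.cons_coe, ih, length_cons, Multiset.replicate_succ,
      Multiset.cons_add, Multiset.add_cons, Multiset.cons_swap m x]

theorem isChain_interleaveWith (m : α) {c : List α} (hc : ∀ x ∈ c, x ≠ m) :
    (interleaveWith m c).IsChain (· ≠ ·) := by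
  induction c with
  | nil => exact isChain_singleton m
  | cons x t ih =>
    have hx := hc x mem_cons_self
    refine isChain_cons_cons.mpr ⟨hx.symm, isChain_cons.mpr ⟨?_, ih ?_⟩⟩
    · simpa [head?_interleaveWith] using hx
    · exact fun y hy => hc y (mem_cons_of_mem x hy)

theorem coe_flatten_map_interleaveWith (m : α) (cs : List (List α)) :
    ((cs.map (interleaveWith m)).flatten : Multiset α)
      = cs.flatten + Multiset.replicate (cs.flatten.length + cs.length) m := by
  induction cs with
  | nil => rfl
  | cons c cs ih =>
    rw [map_cons, flatten_cons, ← Multiset.coe_add, ih, coe_interleaveWith, flatten_cons,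
      ← Multiset.coe_add, length_append, length_cons]
    simp only [Multiset.replicate_add]
    abel

-- Spelled as in the main statement, where the coercion elaborates through the `List` monad.
theorem sum_map_coe (bins : List (List α)) :
    (bins.map (fun b => (b : Multiset α))).sum = bins.flatten := by
  induction bins with
  | nil => rfl
  | cons b bins ih => simp_all

end List

namespace Multiset

variable {α : Type*} [DecidableEq α]

theorem filter_ne_add_replicate_count (s : Multiset α) (m : α) :
    s.filter (· ≠ m) + replicate (s.count m) m = s := by
  rw [← filter_eq' s m, add_comm]
  exact filter_add_not (· = m) s

theorem card_filter_ne (s : Multiset α) (m : α) :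
    card (s.filter (· ≠ m)) = card s - s.count m := by
  have := congrArg card (filter_ne_add_replicate_count s m)
  rw [card_add, card_replicate] at this
  omega

theorem exists_interleaved_packing (s : Multiset α) (m : α) (k d : ℕ)
    (hcount : s.count m = card (s.filter (· ≠ m)) + d)
    (hcap : card (s.filter (· ≠ m)) ≤ d * k) :
    ∃ bins : List (List α), bins.length = d ∧
      (bins.map (fun b => (b : Multiset α))).sum = s ∧
      ∀ b ∈ bins, b.length ≤ 2 * k + 1 ∧ b.IsChain (· ≠ ·) := by
  set others := (s.filter (· ≠ m)).toList
  have hothers : others.length = card (s.filter (· ≠ m)) := length_toList _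
  set chunks := (List.replicate d k).splitLengths others
  have hflatten : chunks.flatten = others :=
    List.flatten_splitLengths _ _ (by simpa [List.sum_replicate] using hothers.trans_le hcap)
  have hchunks : chunks.length = d := by simp [chunks]
  refine ⟨chunks.map (List.interleaveWith m), (List.length_map _).trans hchunks, ?_, ?_⟩
  · rw [List.sum_map_coe, List.coe_flatten_map_interleaveWith, hflatten, hchunks, hothers,
      ← hcount, coe_toList, filter_ne_add_replicate_count]
  · simp only [List.mem_map]
    rintro _ ⟨c, hc, rfl⟩
    have hck : c.length ≤ k :=
      List.length_mem_splitLengths _ _ k (fun n hn => (List.eq_of_mem_replicate hn).le) c hc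
    refine ⟨by rw [List.length_interleaveWith]; omega,
      List.isChain_interleaveWith m fun x hx => ?_⟩
    have hx : x ∈ others := hflatten ▸ List.mem_flatten.mpr ⟨c, hc, hx⟩
    exact (Multiset.mem_filter.mp (Multiset.mem_toList.mp hx)).2

theorem two_mul_count_le_card_add_length (s : Multiset α) (m : α) (bins : List (List α))
    (hsum : (bins.map (fun b => (b : Multiset α))).sum = s)
    (hbins : ∀ b ∈ bins, b.IsChain (· ≠ ·)) :
    2 * s.count m ≤ card s + bins.length := by
  rw [List.sum_map_coe] at hsum
  rw [← hsum, coe_count, coe_card]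
  exact List.two_mul_count_flatten_le m bins hbins

end Multiset

theorem alternate_unit_optimal_odd_irreducible_general {α : Type*} [DecidableEq α]
    (L : ℕ) (hL : 3 ≤ L) (s : Multiset α) (m : α)
    (n O D : ℕ) (hn : n = Multiset.card s) (hO : O = n - s.count m)
    (hD : D = s.count m - O)
    (hirr : D > (O + (L - 1) / 2 - 1) / ((L - 1) / 2)) :
    (∃ bins : List (List α),
        bins.length = D ∧
        (bins.map (fun b => (b : Multiset α))).sum = s ∧
        ∀ b ∈ bins, b.length ≤ L ∧ List.Chain' (· ≠ ·) b) ∧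
    (∀ bins : List (List α),
        (bins.map (fun b => (b : Multiset α))).sum = s →
        (∀ b ∈ bins, b.length ≤ L ∧ List.Chain' (· ≠ ·) b) →
        D ≤ bins.length) := by
  have hcount_le : s.count m ≤ n := hn ▸ Multiset.count_le_card m s
  have hDpos : 0 < D := Nat.zero_lt_of_lt hirr
  have hOk : O ≤ D * ((L - 1) / 2) := by
    have := (Nat.div_lt_iff_lt_mul (by omega)).mp hirr
    omega
  have hothers : Multiset.card (s.filter (· ≠ m)) = O := by
    rw [Multiset.card_filter_ne, hO, hn]
  constructor
  · obtain ⟨bins, hlen, hsum, hbins⟩ :=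
      Multiset.exists_interleaved_packing s m ((L - 1) / 2) D (by omega) (by omega)
    exact ⟨bins, hlen, hsum, fun b hb => ⟨(hbins b hb).1.trans (by omega), (hbins b hb).2⟩⟩
  · intro bins hsum hbins
    have := Multiset.two_mul_count_le_card_add_length s m bins hsum fun b hb => (hbins b hb).2
    omega

theorem alternate_unit_optimal_odd_irreducible {α : Type*} [DecidableEq α]
    (L : ℕ) (hodd : Odd L) (hL : 3 ≤ L) (s : Multiset α) (m : α)
    (n O D : ℕ) (hn : n = Multiset.card s) (hO : O = n - s.count m)
    (hD : D = s.count m - O) (hDpos : 0 < D)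
    (hirr : D > (O + (L - 1) / 2 - 1) / ((L - 1) / 2)) :
    (∃ bins : List (List α),
        bins.length = D ∧
        (bins.map (fun b => (b : Multiset α))).sum = s ∧
        ∀ b ∈ bins, b.length ≤ L ∧ List.Chain' (· ≠ ·) b) ∧
    (∀ bins : List (List α),
        (bins.map (fun b => (b : Multiset α))).sum = s →
        (∀ b ∈ bins, b.length ≤ L ∧ List.Chain' (· ≠ ·) b) →
        D ≤ bins.length) :=
  alternate_unit_optimal_odd_irreducible_general L hL s m n O D hn hO hD hirr
end

section
/- Let α be a type with decidable equality, L an even natural number with L ≥ 2, s : Multiset α, and m : α. Set n = Multiset.card s and suppose D = s.count m - (n - s.count m) > 0. Then the minimum number of bins in a valid capacity-L packing of s equals max D ((2 * s.count m + L - 1) / L), i.e., the maximum of the discrepancy D and ⌈2·s.count m / L⌉: there exists such a packing using that many bins, and no valid capacity-L packing uses fewer. -/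
/-!
Write `k` for the number of items of colour `m`, `r = n - k` for the others and `L = 2q`.
In a bin no two adjacent items share a colour, so its `m`-count exceeds its other-count by at
most one; since `L` is even this also caps its `m`-count at `q`. Summing over the bins gives
`D ≤ #bins` and `2k ≤ L · #bins`. Conversely, take `N` bins of the shape `x m x m … x m`,
`D` of them with one more leading `m` and hence at most `q - 1` other items: together they
hold `Nq - D` other items, which suffices because `r + D = k ≤ Nq`.
-/

section

variable {α : Type*}

namespace List

def alternateWith (m : α) (xs : List α) : List α := xs.flatMap fun x => [x, m]

@[simp] theorem alternateWith_nil (m : α) : alternateWith m [] = [] := rfl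

@[simp] theorem alternateWith_cons (m x : α) (xs : List α) :
    alternateWith m (x :: xs) = x :: m :: alternateWith m xs := rfl

@[simp] theorem length_alternateWith (m : α) (xs : List α) :
    (alternateWith m xs).length = 2 * xs.length := by
  induction xs <;> simp [*]; ring

theorem coe_alternateWith (m : α) (xs : List α) :
    (alternateWith m xs : Multiset α) = xs + Multiset.replicate xs.length m := by
  induction xs with
  | nil => rfl
  | cons x xs ih =>
    rw [alternateWith_cons, ← Multiset.cons_coe, ← Multiset.cons_coe, ih, ← Multiset.cons_coe,
      length_cons, Multiset.replicate_succ, Multiset.add_cons, Multiset.cons_add,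
      Multiset.cons_swap]

theorem isChain_cons_alternateWith {m : α} {xs : List α} (h : ∀ x ∈ xs, x ≠ m) :
    (m :: alternateWith m xs).IsChain (· ≠ ·) := by
  induction xs with
  | nil => simp
  | cons x xs ih =>
    have hx := h x mem_cons_self
    exact .cons_cons hx.symm (.cons_cons hx (ih fun y hy => h y (mem_cons_of_mem x hy)))

end List

open List in
theorem exists_alternating_bin (m : α) {ys : List α} (hys : ∀ y ∈ ys, y ≠ m) {e : ℕ}
    (he : e ≤ 1) :
    ∃ b : List α, (b : Multiset α) = ys + Multiset.replicate (ys.length + e) m ∧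
      b.length = 2 * ys.length + e ∧ b.IsChain (· ≠ ·) := by
  interval_cases e
  · exact ⟨alternateWith m ys, coe_alternateWith m ys, by simp,
      (isChain_cons_alternateWith hys).tail⟩
  · refine ⟨m :: alternateWith m ys, ?_, by simp, isChain_cons_alternateWith hys⟩
    rw [← Multiset.cons_coe, coe_alternateWith, Multiset.replicate_succ, Multiset.add_cons]

open List in
theorem exists_alternating_packing (m : α) (q : ℕ) :
    ∀ (N d : ℕ) (xs : List α), (∀ x ∈ xs, x ≠ m) → d ≤ N →
      xs.length + d ≤ N * q →
    ∃ bins : List (List α), bins.length = N ∧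
      (bins.map Multiset.ofList).sum = xs + Multiset.replicate (xs.length + d) m ∧
      ∀ b ∈ bins, b.length ≤ 2 * q ∧ b.IsChain (· ≠ ·)
  | 0, d, xs, _, _, hcap => ⟨[], rfl, by simp_all, by simp⟩
  | N + 1, d, xs, hxs, hd, hcap => by
    -- the first bin takes an extra `m` as long as the discrepancy `d` is not used up
    obtain ⟨e, he⟩ : ∃ e, e = min d 1 := ⟨_, rfl⟩
    rw [add_one_mul] at hcap
    obtain ⟨b, hb, hblen, hbchain⟩ := exists_alternating_bin m (ys := xs.take (q - e)) (e := e)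
      (fun y hy => hxs y (mem_of_mem_take hy)) (by omega)
    -- the product `N * q` is opaque to `omega`
    have hNq : q = 0 ∧ N * q = 0 ∨ 0 < q ∧ N ≤ N * q := by
      rcases Nat.eq_zero_or_pos q with rfl | hq
      · simp
      · exact .inr ⟨hq, Nat.le_mul_of_pos_right N hq⟩
    obtain ⟨bins, hlen, hsum, hbins⟩ := exists_alternating_packing m q N (d - e)
      (xs.drop (q - e)) (fun x hx => hxs x (mem_of_mem_drop hx)) (by omega)
      (by rw [length_drop]; omega)
    refine ⟨b :: bins, by simp [hlen], ?_, forall_mem_cons.2 ⟨⟨?_, hbchain⟩, hbins⟩⟩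
    · have hcount : xs.length + d
          = (xs.take (q - e)).length + e + ((xs.drop (q - e)).length + (d - e)) := by
        simp only [length_take, length_drop]; omega
      have hsplit : (xs : Multiset α) = ↑(xs.take (q - e)) + ↑(xs.drop (q - e)) := by
        rw [Multiset.coe_add, take_append_drop]
      rw [map_cons, sum_cons, hb, hsum, hcount, hsplit]
      simp only [Multiset.replicate_add]
      abel
    · rw [hblen, length_take]
      omega

theorem Multiset.card_sum_map_ofList (bins : List (List α)) :
    Multiset.card (bins.map Multiset.ofList).sum = (bins.map List.length).sum := by
  induction bins <;> simp [*]

variable [DecidableEq α]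

theorem List.two_mul_count_le_length_add_one_of_isChain_ne (a : α) :
    ∀ {l : List α}, l.IsChain (· ≠ ·) → 2 * l.count a ≤ l.length + 1
  | [], _ => by simp
  | [x], _ => by by_cases h : x = a <;> simp [h]
  | x :: y :: l, h => by
    obtain ⟨hxy, hyl⟩ := List.isChain_cons_cons.mp h
    have ih := two_mul_count_le_length_add_one_of_isChain_ne a (l := l) hyl.tail
    have : (x :: y :: l).count a ≤ l.count a + 1 := by
      by_cases hx : x = a <;> by_cases hy : y = a
      · exact absurd (hx.trans hy.symm) hxy
      all_goals simp [hx, hy]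
    simp only [List.length_cons]
    omega

theorem List.two_mul_count_le_of_isChain_ne_of_length_le {L : ℕ} (hL : Even L) (a : α)
    {l : List α} (hl : l.IsChain (· ≠ ·)) (hlen : l.length ≤ L) : 2 * l.count a ≤ L := by
  obtain ⟨q, rfl⟩ := hL
  have := two_mul_count_le_length_add_one_of_isChain_ne a hl
  omega

theorem Multiset.count_sum_map_ofList (bins : List (List α)) (a : α) :
    (bins.map Multiset.ofList).sum.count a = (bins.map (List.count a)).sum := by
  induction bins <;> simp [*]

theorem two_mul_count_sum_le_card_add_length (a : α) {bins : List (List α)}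
    (h : ∀ b ∈ bins, b.IsChain (· ≠ ·)) :
    2 * (bins.map Multiset.ofList).sum.count a
      ≤ Multiset.card (bins.map Multiset.ofList).sum + bins.length := by
  rw [Multiset.count_sum_map_ofList, Multiset.card_sum_map_ofList, ← List.sum_map_mul_left]
  calc (bins.map fun b => 2 * b.count a).sum ≤ (bins.map fun b => b.length + 1).sum :=
        List.sum_le_sum fun b hb => List.two_mul_count_le_length_add_one_of_isChain_ne a (h b hb)
    _ = _ := by simp [List.sum_map_add]

theorem two_mul_count_sum_le_length_mul {L : ℕ} (hL : Even L) (a : α) {bins : List (List α)}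
    (h : ∀ b ∈ bins, b.length ≤ L ∧ b.IsChain (· ≠ ·)) :
    2 * (bins.map Multiset.ofList).sum.count a ≤ bins.length * L := by
  rw [Multiset.count_sum_map_ofList, ← List.sum_map_mul_left]
  simpa using List.sum_le_card_nsmul (bins.map fun b => 2 * b.count a) L
    (List.forall_mem_map.2 fun b hb =>
      List.two_mul_count_le_of_isChain_ne_of_length_le hL a (h b hb).2 (h b hb).1)

theorem Multiset.exists_coe_add_replicate_count (s : Multiset α) (m : α) :
    ∃ xs : List α, (∀ x ∈ xs, x ≠ m) ∧ ↑xs + replicate (s.count m) m = s :=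
  ⟨(s.filter (fun x => ¬x = m)).toList,
    fun _ hx => (mem_filter.1 (mem_toList.1 hx)).2,
    by rw [coe_toList, ← filter_eq', add_comm, filter_add_not]⟩

end

theorem alternate_unit_optimal_even_pos_discrepancy {α : Type*} [DecidableEq α]
    (L : ℕ) (heven : Even L) (hL : 2 ≤ L) (s : Multiset α) (m : α)
    (D : ℕ) (hD : D = s.count m - (Multiset.card s - s.count m)) (hDpos : 0 < D) :
    (∃ bins : List (List α),
        bins.length = max D ((2 * s.count m + L - 1) / L) ∧
        (bins.map (fun b => (b : Multiset α))).sum = s ∧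
        ∀ b ∈ bins, b.length ≤ L ∧ List.Chain' (· ≠ ·) b) ∧
    (∀ bins : List (List α),
        (bins.map (fun b => (b : Multiset α))).sum = s →
        (∀ b ∈ bins, b.length ≤ L ∧ List.Chain' (· ≠ ·) b) →
        max D ((2 * s.count m + L - 1) / L) ≤ bins.length) := by
  -- the coercion `List α → Multiset α` is elaborated as a lift of the whole list of bins
  have coe_sum (bins : List (List α)) :
      (bins.map fun b => (b : Multiset α)).sum = (bins.map Multiset.ofList).sum := by
    simp only [List.bind_eq_flatMap, List.pure_def, ← List.map_eq_flatMap, List.map_map]; rfl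
  simp only [coe_sum]
  have hceil (c : ℕ) : (2 * s.count m + L - 1) / L ≤ c ↔ 2 * s.count m ≤ L * c := by
    rw [← Nat.ceilDiv_eq_add_pred_div, ceilDiv_le_iff_le_mul (by omega)]
  obtain ⟨xs, hxs, hs⟩ := Multiset.exists_coe_add_replicate_count s m
  have hcard : xs.length + s.count m = Multiset.card s := by simpa using congrArg Multiset.card hs
  have hk : xs.length + D = s.count m := by omega
  refine ⟨?_, fun bins hsum hbins => ?_⟩
  · obtain ⟨q, rfl⟩ := heven
    set N := max D ((2 * s.count m + (q + q) - 1) / (q + q))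
    have hN := (hceil N).1 (le_max_right _ _)
    obtain ⟨bins, hlen, hsum, hbins⟩ :=
      exists_alternating_packing m q N D xs hxs (le_max_left _ _) (by linarith)
    refine ⟨bins, hlen, by rw [hsum, hk, hs], fun b hb => ⟨?_, (hbins b hb).2⟩⟩
    linarith [(hbins b hb).1]
  · have h1 := two_mul_count_sum_le_card_add_length m fun b hb => (hbins b hb).2
    have h2 := two_mul_count_sum_le_length_mul heven m hbins
    rw [hsum] at h1 h2
    exact max_le (by omega) ((hceil _).2 (by linarith))
end
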